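/- arXiv:2105.05491 — 2 statements merged into one kernel-verified Lean document; each statement's English description precedes it below -/
import Mathlib

section
/- If dim satisfies countable stability, νₙ → ν setwise, and sup_n dim^U(νₙ) ≤ dim^U(ν), then lim_{n→∞} dim^U(νₙ) = dim^U(ν). -/
open MeasureTheory Filter Set
open scoped ENNReal NNReal Topology

noncomputable def dimU {X : Type*} [MeasurableSpace X] (dim : Set X → ℝ≥0∞)
    (μ : Measure X) : ℝ≥0∞ :=
  sInf {d | ∃ A : Set X, MeasurableSet A ∧ μ Aᶜ = 0 ∧ dim A = d}

def SetwiseTendsto {X : Type*} [MeasurableSpace X] (ν : ℕ → Measure X) (μ : Measure X) : Prop :=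
  ∀ A : Set X, MeasurableSet A → Tendsto (fun n => ν n A) atTop (nhds (μ A))

def CountablyStable {X : Type*} [MeasurableSpace X] (dim : Set X → ℝ≥0∞) : Prop :=
  ∀ A : ℕ → Set X, (∀ i, MeasurableSet (A i)) → dim (⋃ i, A i) = ⨆ i, dim (A i)

/-! `dimU dim` is lower semicontinuous along setwise convergent sequences: if infinitely many
`νₙ` are carried by sets of dimension `< c`, the union `B` of those sets carries all of them, so
setwise convergence gives `μ Bᶜ = 0`, while countable stability gives `dim B ≤ c`. Hence
`dimU dim μ ≤ liminf dimU dim (νₙ)`, and the hypothesis `sup_n dimU dim (νₙ) ≤ dimU dim μ` supplies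
the matching bound on the limsup. -/

section

variable {X : Type*} [MeasurableSpace X] {dim : Set X → ℝ≥0∞}

theorem dimU_le_of_measure_compl_eq_zero {μ : Measure X} {A : Set X} (hA : MeasurableSet A)
    (hμA : μ Aᶜ = 0) : dimU dim μ ≤ dim A :=
  sInf_le ⟨A, hA, hμA, rfl⟩

theorem exists_measure_compl_eq_zero_of_dimU_lt {μ : Measure X} {c : ℝ≥0∞}
    (h : dimU dim μ < c) : ∃ A, MeasurableSet A ∧ μ Aᶜ = 0 ∧ dim A < c := by
  obtain ⟨_, ⟨A, hA, hμA, rfl⟩, hAc⟩ := sInf_lt_iff.mp h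
  exact ⟨A, hA, hμA, hAc⟩

theorem CountablyStable.iUnion_le (hdim : CountablyStable dim) {A : ℕ → Set X}
    (hA : ∀ i, MeasurableSet (A i)) {c : ℝ≥0∞} (hc : ∀ i, dim (A i) ≤ c) :
    dim (⋃ i, A i) ≤ c := by
  rw [hdim A hA]
  exact iSup_le hc

theorem SetwiseTendsto.measure_eq_zero_of_frequently {ν : ℕ → Measure X} {μ : Measure X}
    (h : SetwiseTendsto ν μ) {B : Set X} (hB : MeasurableSet B)
    (hfreq : ∃ᶠ n in atTop, ν n B = 0) : μ B = 0 :=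
  tendsto_nhds_unique_of_frequently_eq (h B hB) tendsto_const_nhds hfreq

theorem dimU_le_of_frequently_dimU_lt (hdim : CountablyStable dim) {ν : ℕ → Measure X}
    {μ : Measure X} (hconv : SetwiseTendsto ν μ) {c : ℝ≥0∞}
    (hfreq : ∃ᶠ n in atTop, dimU dim (ν n) < c) : dimU dim μ ≤ c := by
  obtain ⟨φ, hφ, hφc⟩ := extraction_of_frequently_atTop hfreq
  choose A hA hνA hAc using fun k => exists_measure_compl_eq_zero_of_dimU_lt (hφc k)
  have hB : MeasurableSet (⋃ k, A k) := .iUnion hA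
  have hνB : ∀ k, ν (φ k) (⋃ k, A k)ᶜ = 0 := fun k =>
    measure_mono_null (compl_subset_compl.mpr (subset_iUnion A k)) (hνA k)
  have hμB : μ (⋃ k, A k)ᶜ = 0 :=
    hconv.measure_eq_zero_of_frequently hB.compl
      (hφ.tendsto_atTop.frequently (Frequently.of_forall hνB))
  exact (dimU_le_of_measure_compl_eq_zero hB hμB).trans
    (hdim.iUnion_le hA fun k => (hAc k).le)

theorem dimU_le_liminf_of_setwiseTendsto (hdim : CountablyStable dim) {ν : ℕ → Measure X}
    {μ : Measure X} (hconv : SetwiseTendsto ν μ) :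
    dimU dim μ ≤ liminf (fun n => dimU dim (ν n)) atTop :=
  le_of_forall_gt_imp_ge_of_dense fun _ hc =>
    dimU_le_of_frequently_dimU_lt hdim hconv (frequently_lt_of_liminf_lt (by isBoundedDefault) hc)

end

theorem dimU_tendsto_of_sup_le_general {X : Type*} [MeasurableSpace X]
    (dim : Set X → ℝ≥0∞) (hdim : CountablyStable dim)
    (ν : ℕ → Measure X) (μ : Measure X) (hconv : SetwiseTendsto ν μ)
    (hsup : (⨆ n, dimU dim (ν n)) ≤ dimU dim μ) :
    Tendsto (fun n => dimU dim (ν n)) atTop (nhds (dimU dim μ)) := by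
  have hlimsup : limsup (fun n => dimU dim (ν n)) atTop ≤ dimU dim μ :=
    limsup_le_of_le (by isBoundedDefault) (.of_forall fun n => (le_iSup _ n).trans hsup)
  exact tendsto_of_le_liminf_of_limsup_le (dimU_le_liminf_of_setwiseTendsto hdim hconv) hlimsup

/-- If `dim` is countably stable, `νₙ → ν` setwise, and `sup_n dim^U(νₙ) ≤ dim^U(ν)`,
then `dim^U(νₙ) → dim^U(ν)`. -/
theorem dimU_tendsto_of_sup_le {X : Type*} [MetricSpace X] [MeasurableSpace X]
    [BorelSpace X] (dim : Set X → ℝ≥0∞) (hdim : CountablyStable dim)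
    (ν : ℕ → Measure X) (μ : Measure X) (hconv : SetwiseTendsto ν μ)
    (hsup : (⨆ n, dimU dim (ν n)) ≤ dimU dim μ) :
    Tendsto (fun n => dimU dim (ν n)) atTop (nhds (dimU dim μ)) :=
  dimU_tendsto_of_sup_le_general dim hdim ν μ hconv hsup
end

section
/- Let 0 < a < 1 and define the probability measure ν on [0,1] by ν = (1−a) Σ_{i=0}^∞ (a^i / (a^{i²} − a^{(i+1)²})) 𝔏¹|_{[a^{(i+1)²}, a^{i²}]}, where 𝔏¹ is Lebesgue measure. Then the correlation dimension of ν is 0, i.e., lim_{r→0} log(∫ ν(B(x,r)) dν(x)) / log r = 0. -/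
/-!
On the scale `a ^ ((i + 1) ^ 2) < r ≤ a ^ (i ^ 2)` the whole block
`Iᵢ₊₁ = [a ^ ((i + 2) ^ 2), a ^ ((i + 1) ^ 2)]`, of mass `(1 - a) a ^ (i + 1)`, lies in the
`r`-ball about each of its points, so the correlation integral is at least `((1 - a) a ^ (i + 1))²`,
while `-log r ≥ i² log (1 / a)`. Hence `-log ∫ ν (B (x, r)) dν = O(i) = O(√(-log r))`, which is
`o(-log r)`.
-/

open MeasureTheory Filter Set Metric
open scoped Topology

section CorrelationIntegral

variable {X : Type*} [PseudoMetricSpace X] [MeasurableSpace X] [OpensMeasurableSpace X]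
  [SecondCountableTopology X] (ν : Measure X) [IsFiniteMeasure ν]

theorem measurable_measure_ball (r : ℝ) : Measurable fun x => ν (ball x r) :=
  measurable_measure_prodMk_left_finite
    (isOpen_lt (continuous_snd.dist continuous_fst) continuous_const).measurableSet

theorem integrable_measureReal_ball (r : ℝ) : Integrable (fun x => ν.real (ball x r)) ν :=
  (integrable_const (ν.real univ)).mono'
    (measurable_measure_ball ν r).ennreal_toReal.aestronglyMeasurable
    (ae_of_all _ fun _ => by
      rw [Real.norm_of_nonneg measureReal_nonneg]
      exact measureReal_mono (subset_univ _))

theorem integral_measureReal_ball_le (r : ℝ) :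
    ∫ x, ν.real (ball x r) ∂ν ≤ ν.real univ ^ 2 :=
  calc ∫ x, ν.real (ball x r) ∂ν ≤ ∫ _, ν.real univ ∂ν :=
        integral_mono (integrable_measureReal_ball ν r) (integrable_const _)
          fun _ => measureReal_mono (subset_univ _)
    _ = ν.real univ ^ 2 := by rw [integral_const, smul_eq_mul, sq]

theorem measureReal_sq_le_integral_measureReal_ball {s : Set X} {r : ℝ} (hs : MeasurableSet s)
    (hsr : ∀ x ∈ s, s ⊆ ball x r) : ν.real s ^ 2 ≤ ∫ x, ν.real (ball x r) ∂ν :=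
  calc ν.real s ^ 2 = ν.real s * ν.real s := sq _
    _ ≤ ∫ x in s, ν.real (ball x r) ∂ν :=
        setIntegral_ge_of_const_le_real hs (measure_ne_top ν s)
          (fun x hx => measureReal_mono (hsr x hx)) (integrable_measureReal_ball ν r).integrableOn
    _ ≤ ∫ x, ν.real (ball x r) ∂ν :=
        setIntegral_le_integral (integrable_measureReal_ball ν r)
          (ae_of_all _ fun _ => measureReal_nonneg)

end CorrelationIntegral

theorem tendsto_log_div_log_of_neg_log_le_sqrt {f : ℝ → ℝ} {A B : ℝ}
    (hf : ∀ᶠ r in 𝓝[>] 0, 0 ≤ f r ∧ f r ≤ 1 ∧ -Real.log (f r) ≤ A + B * √(-Real.log r)) :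
    Tendsto (fun r => Real.log (f r) / Real.log r) (𝓝[>] 0) (𝓝 0) := by
  have hsqrt : Tendsto (fun r => √(-Real.log r)) (𝓝[>] 0) atTop :=
    Real.tendsto_sqrt_atTop.comp (tendsto_neg_atBot_atTop.comp Real.tendsto_log_nhdsGT_zero)
  have hbound : Tendsto (fun r => (A / √(-Real.log r) + B) / √(-Real.log r)) (𝓝[>] 0) (𝓝 0) :=
    ((tendsto_const_nhds.div_atTop hsqrt).add_const B).div_atTop hsqrt
  refine squeeze_zero' ?_ ?_ hbound
  · filter_upwards [hf, Ioo_mem_nhdsGT one_pos] with r ⟨hf0, hf1, _⟩ ⟨hr0, hr1⟩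
    exact div_nonneg_of_nonpos (Real.log_nonpos hf0 hf1) (Real.log_neg hr0 hr1).le
  · filter_upwards [hf, Ioo_mem_nhdsGT one_pos] with r ⟨_, _, hfr⟩ ⟨hr0, hr1⟩
    have ht : 0 < -Real.log r := neg_pos.2 (Real.log_neg hr0 hr1)
    have hsq : √(-Real.log r) * √(-Real.log r) = -Real.log r := Real.mul_self_sqrt ht.le
    calc Real.log (f r) / Real.log r = -Real.log (f r) / -Real.log r := (neg_div_neg_eq _ _).symm
      _ ≤ (A + B * √(-Real.log r)) / -Real.log r := div_le_div_of_nonneg_right hfr ht.le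
      _ = (A / √(-Real.log r) + B) / √(-Real.log r) := by
        nth_rw 2 [← hsq]
        field_simp

theorem smul_volume_restrict_Icc_apply_of_subset {u v c : ℝ} (huv : u < v) (hc : 0 ≤ c)
    {s : Set ℝ} (hs : Icc u v ⊆ s) :
    (ENNReal.ofReal (c / (v - u)) • volume.restrict (Icc u v)) s = ENNReal.ofReal c := by
  rw [Measure.smul_apply, Measure.restrict_apply_superset hs, Real.volume_Icc, smul_eq_mul,
    ← ENNReal.ofReal_mul (div_nonneg hc (sub_pos.2 huv).le), div_mul_cancel₀ _ (sub_pos.2 huv).ne']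

theorem pow_succ_sq_lt_pow_sq {a : ℝ} (ha : a ∈ Ioo 0 1) (i : ℕ) : a ^ ((i + 1) ^ 2) < a ^ (i ^ 2) :=
  pow_lt_pow_right_of_lt_one₀ ha.1 ha.2 (Nat.pow_lt_pow_left i.lt_succ_self two_ne_zero)

theorem exists_pow_succ_sq_lt_le_pow_sq {a r : ℝ} (ha : a ∈ Ioo 0 1) (hr0 : 0 < r) (hr1 : r ≤ 1) :
    ∃ i : ℕ, a ^ ((i + 1) ^ 2) < r ∧ r ≤ a ^ (i ^ 2) := by
  have hex : ∃ n : ℕ, a ^ ((n + 1) ^ 2) < r := by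
    obtain ⟨n, hn⟩ := exists_pow_lt_of_lt_one hr0 ha.2
    exact ⟨n, (pow_le_pow_of_le_one ha.1.le ha.2.le (by nlinarith)).trans_lt hn⟩
  refine ⟨Nat.find hex, Nat.find_spec hex, ?_⟩
  rcases h : Nat.find hex with _ | n
  · simpa using hr1
  · exact not_lt.1 (Nat.find_min hex (by omega : n < Nat.find hex))

-- The `i`-th summand of the Mattila–Morán–Rey measure: mass `(1 - a) a ^ i`, spread uniformly.
noncomputable def mmrPiece (a : ℝ) (i : ℕ) : Measure ℝ :=
  ENNReal.ofReal ((1 - a) * a ^ i / (a ^ (i ^ 2) - a ^ ((i + 1) ^ 2))) •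
    volume.restrict (Icc (a ^ ((i + 1) ^ 2)) (a ^ (i ^ 2)))

noncomputable def mmrMeasure (a : ℝ) : Measure ℝ := Measure.sum (mmrPiece a)

section MMRMeasure

variable {a : ℝ} (ha : a ∈ Ioo 0 1)
include ha

theorem mmrPiece_apply_of_subset (i : ℕ) {s : Set ℝ}
    (hs : Icc (a ^ ((i + 1) ^ 2)) (a ^ (i ^ 2)) ⊆ s) :
    mmrPiece a i s = ENNReal.ofReal ((1 - a) * a ^ i) :=
  smul_volume_restrict_Icc_apply_of_subset (pow_succ_sq_lt_pow_sq ha i)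
    (mul_nonneg (sub_nonneg.2 ha.2.le) (pow_nonneg ha.1.le i)) hs

theorem mmrMeasure_univ : mmrMeasure a univ = 1 := by
  rw [mmrMeasure, Measure.sum_apply _ MeasurableSet.univ]
  simp_rw [mmrPiece_apply_of_subset ha _ (subset_univ _)]
  rw [← ENNReal.ofReal_tsum_of_nonneg
      (fun i => mul_nonneg (sub_nonneg.2 ha.2.le) (pow_nonneg ha.1.le i))
      ((summable_geometric_of_lt_one ha.1.le ha.2).mul_left _),
    tsum_mul_left, tsum_geometric_of_lt_one ha.1.le ha.2, mul_inv_cancel₀ (sub_pos.2 ha.2).ne',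
    ENNReal.ofReal_one]

theorem isProbabilityMeasure_mmrMeasure : IsProbabilityMeasure (mmrMeasure a) :=
  ⟨mmrMeasure_univ ha⟩

theorem le_mmrMeasure_Icc (i : ℕ) :
    ENNReal.ofReal ((1 - a) * a ^ i) ≤ mmrMeasure a (Icc (a ^ ((i + 1) ^ 2)) (a ^ (i ^ 2))) :=
  (mmrPiece_apply_of_subset ha i subset_rfl).symm.le.trans (Measure.le_sum (mmrPiece a) i _)

theorem sq_le_integral_mmrMeasure_ball {r : ℝ} {i : ℕ} (hr : a ^ (i ^ 2) < r) :
    ((1 - a) * a ^ i) ^ 2 ≤ ∫ x, (mmrMeasure a).real (ball x r) ∂mmrMeasure a := by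
  have := isProbabilityMeasure_mmrMeasure ha
  set I := Icc (a ^ ((i + 1) ^ 2)) (a ^ (i ^ 2))
  have hmass : (1 - a) * a ^ i ≤ (mmrMeasure a).real I :=
    (ENNReal.ofReal_le_iff_le_toReal (measure_ne_top _ _)).1 (le_mmrMeasure_Icc ha i)
  have hball : ∀ x ∈ I, I ⊆ ball x r := fun x hx y hy =>
    mem_ball.2 <| (Real.dist_le_of_mem_Icc hy hx).trans_lt <| by
      linarith [pow_pos ha.1 ((i + 1) ^ 2)]
  calc ((1 - a) * a ^ i) ^ 2 ≤ (mmrMeasure a).real I ^ 2 :=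
        pow_le_pow_left₀ (mul_nonneg (sub_nonneg.2 ha.2.le) (pow_nonneg ha.1.le i)) hmass 2
    _ ≤ _ := measureReal_sq_le_integral_measureReal_ball _ measurableSet_Icc hball

theorem neg_log_integral_mmrMeasure_ball_le {r : ℝ} (hr0 : 0 < r) (hr1 : r ≤ 1) :
    -Real.log (∫ x, (mmrMeasure a).real (ball x r) ∂mmrMeasure a) ≤
      2 * (-Real.log a - Real.log (1 - a)) + 2 * √(-Real.log a) * √(-Real.log r) := by
  obtain ⟨i, hi, hri⟩ := exists_pow_succ_sq_lt_le_pow_sq ha hr0 hr1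
  set L := -Real.log a
  have hL : 0 < L := neg_pos.2 (Real.log_neg ha.1 ha.2)
  have hc : 0 < (1 - a) * a ^ (i + 1) := mul_pos (sub_pos.2 ha.2) (pow_pos ha.1 _)
  have hlogI : 2 * (Real.log (1 - a) - (i + 1) * L) ≤
      Real.log (∫ x, (mmrMeasure a).real (ball x r) ∂mmrMeasure a) := by
    have := Real.log_le_log (pow_pos hc 2) (sq_le_integral_mmrMeasure_ball ha hi)
    rw [Real.log_pow, Real.log_mul (sub_pos.2 ha.2).ne' (pow_pos ha.1 _).ne', Real.log_pow] at this
    push_cast at this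
    linarith
  have hlogr : (i : ℝ) ^ 2 * L ≤ -Real.log r := by
    have := Real.log_le_log hr0 hri
    rw [Real.log_pow] at this
    push_cast at this
    linarith
  have hi_le : (i : ℝ) * √L ≤ √(-Real.log r) :=
    (Real.le_sqrt (by positivity) ((by positivity : (0 : ℝ) ≤ (i : ℝ) ^ 2 * L).trans hlogr)).2
      (by rwa [mul_pow, Real.sq_sqrt hL.le])
  have hL_sqrt : L = √L * √L := (Real.mul_self_sqrt hL.le).symm
  nlinarith [Real.sqrt_nonneg L]

end MMRMeasure

/-- The Mattila–Morán–Rey measure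
`ν = (1−a) Σ_{i=0}^∞ (a^i/(a^{i²}−a^{(i+1)²})) 𝔏¹|_{[a^{(i+1)²}, a^{i²}]}`
has correlation dimension `0`. -/
theorem correlation_dim_MMR_measure_eq_zero (a : ℝ) (ha : a ∈ Set.Ioo (0:ℝ) 1)
    (ν : Measure ℝ)
    (hν : ν = Measure.sum (fun i : ℕ =>
      ENNReal.ofReal ((1 - a) * a ^ i / (a ^ (i ^ 2) - a ^ ((i + 1) ^ 2))) •
        volume.restrict (Set.Icc (a ^ ((i + 1) ^ 2)) (a ^ (i ^ 2))))) :
    Tendsto (fun r : ℝ => Real.log (∫ x, (ν (ball x r)).toReal ∂ν) / Real.log r)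
      (nhdsWithin 0 (Set.Ioi 0)) (nhds 0) := by
  obtain rfl : ν = mmrMeasure a := hν
  have := isProbabilityMeasure_mmrMeasure ha
  apply tendsto_log_div_log_of_neg_log_le_sqrt
    (f := fun r => ∫ x, (mmrMeasure a).real (ball x r) ∂mmrMeasure a)
  filter_upwards [Ioc_mem_nhdsGT one_pos] with r ⟨hr0, hr1⟩
  refine ⟨integral_nonneg fun _ => measureReal_nonneg, ?_,
    neg_log_integral_mmrMeasure_ball_le ha hr0 hr1⟩
  simpa using integral_measureReal_ball_le (mmrMeasure a) r
end
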